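/- Let X be a topological space and F : X × [0,1] → X a homotopy with F₀ = id_X. Let E = {(α, s) ∈ P(X) × [0,1] : α(1) = F_s(α(0))}, where P(X) is the space of paths [0,1] → X with the compact-open topology. Then the map E → LX × [0,1] sending (α, s) to (the loop obtained by concatenating α with the reverse of the path t ↦ F_{ts}(α(0)), s) is a homotopy equivalence, and hence E is homotopy equivalent to the free loop space LX. -/

import Mathlib

/-!
Paths are continuous maps `ℝ → X` of which only the values on `[0, 1]` matter; `LX` consists of
those with equal values at `0` and `1`.

Write `⋆` for concatenation (`halfConcat`) and `Ψ` for the inverse `TwistedLoops.ofLoop`.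
Both composites have the form `(a ⋆ b) ⋆ b⁻¹`: for `Ψ ∘ Φ`, `a = α` and `b` is the track
`r ↦ F(α 0, (1 - r) s)` from `α 1` back to `α 0`; for `Φ ∘ Ψ`, `a = δ` and `b = r ↦ F(δ 0, r s)`.
On `[0, 1]`, `(a ⋆ b) ⋆ b⁻¹` is `a ⋆ b` precomposed with `t ↦ min (2t) (3/2 - t)`, and `a` is
`a ⋆ b` precomposed with `t ↦ t / 2`. Both reparametrizations send `0 ↦ 0` and `1 ↦ 1/2`, so the
straight line between them is a homotopy along which the endpoint condition of each space
(`α 1 = F_s(α 0)`, resp. `δ 0 = δ 1`) keeps holding. Clamping paths to `[0, 1]` is a homotopy of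
the same kind, and disposes of their values outside `[0, 1]`. Finally `LX × [0, 1] ≃ₕ LX` since
`[0, 1]` is contractible.
-/

/-- Free loops on `X`: continuous `γ : ℝ → X` with `γ 0 = γ 1`. -/
def RLoop (X : Type*) [TopologicalSpace X] : Type _ := {γ : C(ℝ, X) // γ 0 = γ 1}

instance (X : Type*) [TopologicalSpace X] : TopologicalSpace (RLoop X) :=
  inferInstanceAs (TopologicalSpace {γ : C(ℝ, X) // γ 0 = γ 1})

/-- The twisted loop space of a homotopy `F`: pairs `(α, s)` with `s ∈ [0,1]`
and `α(1) = F(α(0), s)`. -/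
def TwistedLoops (X : Type*) [TopologicalSpace X] (F : C(X × ℝ, X)) : Type _ :=
  {p : C(ℝ, X) × ℝ // p.2 ∈ Set.Icc (0 : ℝ) 1 ∧ p.1 1 = F (p.1 0, p.2)}

instance (X : Type*) [TopologicalSpace X] (F : C(X × ℝ, X)) :
    TopologicalSpace (TwistedLoops X F) :=
  inferInstanceAs (TopologicalSpace
    {p : C(ℝ, X) × ℝ // p.2 ∈ Set.Icc (0 : ℝ) 1 ∧ p.1 1 = F (p.1 0, p.2)})

open Set ContinuousMap

noncomputable section

section Reparametrization

variable {X Y : Type*} [TopologicalSpace X] [TopologicalSpace Y]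

def straightReparam (γ : C(Y, C(ℝ, X))) (φ ψ : C(ℝ, ℝ)) :
    C(unitInterval × Y, C(ℝ, X)) :=
  curry ⟨fun q : (unitInterval × Y) × ℝ => γ q.1.2 ((1 - q.1.1) * φ q.2 + q.1.1 * ψ q.2),
    by fun_prop⟩

@[simp]
theorem straightReparam_apply (γ : C(Y, C(ℝ, X))) (φ ψ : C(ℝ, ℝ)) (p : unitInterval × Y)
    (t : ℝ) : straightReparam γ φ ψ p t = γ p.2 ((1 - p.1) * φ t + p.1 * ψ t) :=
  rfl

theorem straightReparam_apply_of_eq (γ : C(Y, C(ℝ, X))) {φ ψ : C(ℝ, ℝ)} {t : ℝ}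
    (h : φ t = ψ t) (p : unitInterval × Y) :
    straightReparam γ φ ψ p t = γ p.2 (φ t) := by
  rw [straightReparam_apply, ← h]
  ring_nf

end Reparametrization

def unitClamp : C(ℝ, ℝ) := ⟨fun t => projIcc 0 1 zero_le_one t, by fun_prop⟩

theorem unitClamp_apply (t : ℝ) : unitClamp t = projIcc 0 1 zero_le_one t := rfl

@[simp] theorem unitClamp_zero : unitClamp 0 = 0 := by simp [unitClamp_apply]

@[simp] theorem unitClamp_one : unitClamp 1 = 1 := by simp [unitClamp_apply]

theorem unitClamp_mem (t : ℝ) : unitClamp t ∈ Icc (0 : ℝ) 1 := (projIcc 0 1 zero_le_one t).2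

section Concatenation

variable {X : Type*}

def halfConcat (a b : ℝ → X) (t : ℝ) : X := if t ≤ 1 / 2 then a (2 * t) else b (2 * t - 1)

def halve : C(ℝ, ℝ) := ⟨fun t => t / 2, by fun_prop⟩

def foldBack : C(ℝ, ℝ) := ⟨fun t => min (2 * t) (3 / 2 - t), by fun_prop⟩

theorem halfConcat_zero (a b : ℝ → X) : halfConcat a b 0 = a 0 := by norm_num [halfConcat]

theorem halfConcat_halve (a b : ℝ → X) {t : ℝ} (ht : t ≤ 1) :
    halfConcat a b (halve t) = a t := by
  show halfConcat a b (t / 2) = a t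
  rw [halfConcat, if_pos (by linarith), mul_div_cancel₀ t two_ne_zero]

theorem halfConcat_halfConcat_reverse {a b b' : ℝ → X} (hab : a 1 = b 0)
    (hb' : ∀ r, b' r = b (1 - r)) {t : ℝ} (ht : t ∈ Icc (0 : ℝ) 1) :
    halfConcat (halfConcat a b) b' t = halfConcat a b (foldBack t) := by
  rcases le_or_gt t (1 / 2) with h | h
  · rw [show foldBack t = 2 * t from min_eq_left (by linarith)]
    exact if_pos h
  · rw [show foldBack t = 3 / 2 - t from min_eq_right (by linarith), halfConcat,
      if_neg h.not_ge, hb']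
    rcases ht.2.eq_or_lt with rfl | h1
    · norm_num [halfConcat, hab]
    · rw [halfConcat, if_neg (by linarith)]
      ring_nf

theorem Continuous.halfConcat [TopologicalSpace X] {Y : Type*} [TopologicalSpace Y]
    {a b : Y → ℝ → X} (ha : Continuous (Function.uncurry a))
    (hb : Continuous (Function.uncurry b)) (hab : ∀ y, a y 1 = b y 0) :
    Continuous fun q : Y × ℝ => halfConcat (a q.1) (b q.1) q.2 :=
  Continuous.if_le (ha.comp (continuous_fst.prodMk (continuous_const.mul continuous_snd)))
    (hb.comp (continuous_fst.prodMk ((continuous_const.mul continuous_snd).sub continuous_const)))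
    continuous_snd continuous_const fun q hq => by norm_num [hq, hab]

end Concatenation

namespace RLoop

variable {X Y : Type*} [TopologicalSpace X] [TopologicalSpace Y]

@[ext]
theorem ext {γ γ' : RLoop X} (h : γ.1 = γ'.1) : γ = γ' := Subtype.ext h

theorem continuous_val : Continuous fun γ : RLoop X => γ.1 := continuous_subtype_val

theorem homotopic_of_eq_comp {f g : C(Y, RLoop X × unitInterval)} (γ : C(Y, C(ℝ, X)))
    {φ ψ : C(ℝ, ℝ)} (h₀ : φ 0 = ψ 0) (h₁ : φ 1 = ψ 1)
    (hf : ∀ y, (f y).1.1 = (γ y).comp φ) (hg : ∀ y, (g y).1.1 = (γ y).comp ψ)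
    (hs : ∀ y, (f y).2 = (g y).2) : f.Homotopic g := by
  refine ⟨⟨⟨fun p => (⟨straightReparam γ φ ψ p, ?_⟩, (f p.2).2), ?_⟩, ?_, ?_⟩⟩
  · rw [straightReparam_apply_of_eq γ h₁, straightReparam_apply_of_eq γ h₀]
    simpa [hf] using (f p.2).1.2
  · exact ((straightReparam γ φ ψ).continuous.subtype_mk _).prodMk (by fun_prop)
  · intro y
    ext t <;> simp [hf]
  · intro y
    ext t <;> simp [hg, hs]

def clamp : C(RLoop X, RLoop X) where
  toFun γ := ⟨γ.1.comp unitClamp, by simp only [comp_apply, unitClamp_zero, unitClamp_one, γ.2]⟩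
  continuous_toFun := by exact ((continuous_precomp unitClamp).comp continuous_val).subtype_mk _

theorem homotopic_clamp_comp (f : C(Y, RLoop X × unitInterval)) :
    f.Homotopic ((clamp.prodMap (.id _)).comp f) :=
  homotopic_of_eq_comp ⟨fun y => (f y).1.1, by fun_prop⟩ (φ := .id ℝ) (ψ := unitClamp)
    (by simp) (by simp) (fun _ => rfl) (fun _ => rfl) (fun _ => rfl)

theorem homotopic_of_eqOn_comp {f g : C(Y, RLoop X × unitInterval)} (γ : C(Y, C(ℝ, X)))
    {φ ψ : C(ℝ, ℝ)} (h₀ : φ 0 = ψ 0) (h₁ : φ 1 = ψ 1)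
    (hf : ∀ y, ∀ t ∈ Icc (0 : ℝ) 1, (f y).1.1 t = γ y (φ t))
    (hg : ∀ y, ∀ t ∈ Icc (0 : ℝ) 1, (g y).1.1 t = γ y (ψ t))
    (hs : ∀ y, (f y).2 = (g y).2) : f.Homotopic g :=
  have clamped : ((clamp.prodMap (.id _)).comp f).Homotopic ((clamp.prodMap (.id _)).comp g) :=
    homotopic_of_eq_comp γ (φ := φ.comp unitClamp) (ψ := ψ.comp unitClamp) (by simpa)
      (by simpa) (fun y => ContinuousMap.ext fun t => hf y _ (unitClamp_mem t))
      (fun y => ContinuousMap.ext fun t => hg y _ (unitClamp_mem t)) hs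
  ((homotopic_clamp_comp f).trans clamped).trans (homotopic_clamp_comp g).symm

end RLoop

namespace TwistedLoops

variable {X Y : Type*} [TopologicalSpace X] [TopologicalSpace Y] {F : C(X × ℝ, X)}

@[ext]
theorem ext {e e' : TwistedLoops X F} (h₁ : e.1.1 = e'.1.1) (h₂ : e.1.2 = e'.1.2) : e = e' :=
  Subtype.ext (Prod.ext h₁ h₂)

theorem continuous_path : Continuous fun e : TwistedLoops X F => e.1.1 := by fun_prop

theorem continuous_param : Continuous fun e : TwistedLoops X F => e.1.2 := by fun_prop

theorem homotopic_of_eq_comp {f g : C(Y, TwistedLoops X F)} (γ : C(Y, C(ℝ, X)))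
    {φ ψ : C(ℝ, ℝ)} (h₀ : φ 0 = ψ 0) (h₁ : φ 1 = ψ 1)
    (hf : ∀ y, (f y).1.1 = (γ y).comp φ) (hg : ∀ y, (g y).1.1 = (γ y).comp ψ)
    (hs : ∀ y, (f y).1.2 = (g y).1.2) : f.Homotopic g := by
  refine ⟨⟨⟨fun p => ⟨(straightReparam γ φ ψ p, (f p.2).1.2), (f p.2).2.1, ?_⟩, ?_⟩, ?_, ?_⟩⟩
  · rw [straightReparam_apply_of_eq γ h₁, straightReparam_apply_of_eq γ h₀]
    simpa [hf] using (f p.2).2.2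
  · exact ((straightReparam γ φ ψ).continuous.prodMk
      (continuous_param.comp (f.continuous.comp continuous_snd))).subtype_mk _
  · intro y
    ext t <;> simp [hf]
  · intro y
    ext t <;> simp [hg, hs]

def clamp : C(TwistedLoops X F, TwistedLoops X F) :=
  ⟨fun e => ⟨(e.1.1.comp unitClamp, e.1.2), e.2.1, by simpa using e.2.2⟩,
    (((continuous_precomp unitClamp).comp continuous_path).prodMk continuous_param).subtype_mk _⟩

theorem homotopic_clamp_comp (f : C(Y, TwistedLoops X F)) : f.Homotopic (clamp.comp f) :=
  homotopic_of_eq_comp ⟨fun y => (f y).1.1, by fun_prop⟩ (φ := .id ℝ) (ψ := unitClamp)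
    (by simp) (by simp) (fun _ => rfl) (fun _ => rfl) (fun _ => rfl)

theorem homotopic_of_eqOn_comp {f g : C(Y, TwistedLoops X F)} (γ : C(Y, C(ℝ, X)))
    {φ ψ : C(ℝ, ℝ)} (h₀ : φ 0 = ψ 0) (h₁ : φ 1 = ψ 1)
    (hf : ∀ y, ∀ t ∈ Icc (0 : ℝ) 1, (f y).1.1 t = γ y (φ t))
    (hg : ∀ y, ∀ t ∈ Icc (0 : ℝ) 1, (g y).1.1 t = γ y (ψ t))
    (hs : ∀ y, (f y).1.2 = (g y).1.2) : f.Homotopic g :=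
  have clamped : (clamp.comp f).Homotopic (clamp.comp g) :=
    homotopic_of_eq_comp γ (φ := φ.comp unitClamp) (ψ := ψ.comp unitClamp) (by simpa)
      (by simpa) (fun y => ContinuousMap.ext fun t => hf y _ (unitClamp_mem t))
      (fun y => ContinuousMap.ext fun t => hg y _ (unitClamp_mem t)) hs
  ((homotopic_clamp_comp f).trans clamped).trans (homotopic_clamp_comp g).symm

def ofLoopPath (hF0 : ∀ x, F (x, 0) = x) : C(RLoop X × unitInterval, C(ℝ, X)) :=
  curry ⟨fun q => halfConcat q.1.1.1 (fun r => F (q.1.1.1 0, r * q.1.2)) q.2,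
    Continuous.halfConcat (a := fun y : RLoop X × unitInterval => ⇑y.1.1)
      (b := fun y r => F (y.1.1 0, r * y.2)) (by fun_prop) (by fun_prop)
      fun y => by rw [zero_mul, hF0]; exact y.1.2.symm⟩

theorem ofLoopPath_apply (hF0 : ∀ x, F (x, 0) = x) (y : RLoop X × unitInterval) :
    ⇑(ofLoopPath hF0 y) = halfConcat y.1.1 fun r => F (y.1.1 0, r * y.2) :=
  rfl

def ofLoop (hF0 : ∀ x, F (x, 0) = x) : C(RLoop X × unitInterval, TwistedLoops X F) where
  toFun y := ⟨(ofLoopPath hF0 y, y.2), y.2.2, by norm_num [ofLoopPath_apply, halfConcat]⟩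
  continuous_toFun := by exact ((ofLoopPath hF0).continuous.prodMk (by fun_prop)).subtype_mk _

theorem ofLoop_comp_homotopic_id (hF0 : ∀ x, F (x, 0) = x)
    {Φ : C(TwistedLoops X F, RLoop X × unitInterval)} (hΦs : ∀ e, ((Φ e).2 : ℝ) = e.1.2)
    (hΦ : ∀ e, ⇑(Φ e).1.1 = halfConcat e.1.1 fun r => F (e.1.1 0, (1 - r) * e.1.2)) :
    ((ofLoop hF0).comp Φ).Homotopic (.id _) := by
  refine homotopic_of_eqOn_comp ⟨fun e => (Φ e).1.1, by fun_prop⟩ (φ := foldBack)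
    (ψ := halve) (by norm_num [foldBack, halve]) (by norm_num [foldBack, halve])
    (fun e t ht => ?_) (fun e t ht => ?_) hΦs
  · have h0 : (Φ e).1.1 0 = e.1.1 0 := by rw [hΦ, halfConcat_zero]
    show halfConcat (Φ e).1.1 (fun r => F ((Φ e).1.1 0, r * (Φ e).2)) t =
      (Φ e).1.1 (foldBack t)
    rw [h0, hΦs, hΦ]
    exact halfConcat_halfConcat_reverse (by norm_num [e.2.2]) (fun r => by ring_nf) ht
  · show e.1.1 t = (Φ e).1.1 (halve t)
    rw [hΦ, halfConcat_halve _ _ ht.2]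

theorem comp_ofLoop_homotopic_id (hF0 : ∀ x, F (x, 0) = x)
    {Φ : C(TwistedLoops X F, RLoop X × unitInterval)} (hΦs : ∀ e, ((Φ e).2 : ℝ) = e.1.2)
    (hΦ : ∀ e, ⇑(Φ e).1.1 = halfConcat e.1.1 fun r => F (e.1.1 0, (1 - r) * e.1.2)) :
    (Φ.comp (ofLoop hF0)).Homotopic (.id _) := by
  refine RLoop.homotopic_of_eqOn_comp (ofLoopPath hF0) (φ := foldBack) (ψ := halve)
    (by norm_num [foldBack, halve]) (by norm_num [foldBack, halve]) (fun y t ht => ?_)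
    (fun y t ht => ?_) (fun y => Subtype.ext (hΦs _))
  · rw [comp_apply, hΦ]
    show halfConcat (ofLoopPath hF0 y) (fun r => F (ofLoopPath hF0 y 0, (1 - r) * y.2)) t =
      ofLoopPath hF0 y (foldBack t)
    rw [ofLoopPath_apply, halfConcat_zero]
    exact halfConcat_halfConcat_reverse (by rw [zero_mul, hF0]; exact y.1.2.symm)
      (fun _ => rfl) ht
  · show y.1.1 t = ofLoopPath hF0 y (halve t)
    rw [ofLoopPath_apply, halfConcat_halve _ _ ht.2]

end TwistedLoops

instance : ContractibleSpace unitInterval :=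
  (convex_Icc (0 : ℝ) 1).contractibleSpace ⟨0, unitInterval.zero_mem⟩

theorem nonempty_prod_homotopyEquiv_of_contractibleSpace (Z C : Type*) [TopologicalSpace Z]
    [TopologicalSpace C] [ContractibleSpace C] : Nonempty (Z × C ≃ₕ Z) :=
  let ⟨h⟩ := ContractibleSpace.hequiv_unit' (X := C)
  ⟨((ContinuousMap.HomotopyEquiv.refl Z).prodCongr h).trans
    (Homeomorph.prodUnique Z Unit).toHomotopyEquiv⟩

end

theorem twisted_loops_homotopyEquiv_loops
    (X : Type*) [TopologicalSpace X]
    (F : C(X × ℝ, X)) (hF0 : ∀ x : X, F (x, 0) = x)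
    (Φ : C(TwistedLoops X F, RLoop X × unitInterval))
    -- `Φ` sends `(α, s)` to `(α ⋆ (t ↦ F_{ts}(α 0))⁻¹, s)`:
    (hΦ : ∀ e : TwistedLoops X F,
      ((Φ e).2 : ℝ) = e.1.2 ∧
      ∀ t : ℝ, ((Φ e).1.1 : C(ℝ, X)) t =
        if t ≤ 1 / 2 then e.1.1 (2 * t) else F (e.1.1 0, (2 - 2 * t) * e.1.2)) :
    (∃ Ψ : C(RLoop X × unitInterval, TwistedLoops X F),
      (Φ.comp Ψ).Homotopic (ContinuousMap.id _) ∧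
      (Ψ.comp Φ).Homotopic (ContinuousMap.id _)) ∧
    Nonempty (ContinuousMap.HomotopyEquiv (TwistedLoops X F) (RLoop X)) := by
  have hΦs : ∀ e, ((Φ e).2 : ℝ) = e.1.2 := fun e => (hΦ e).1
  have hΦpath : ∀ e : TwistedLoops X F,
      ⇑(Φ e).1.1 = halfConcat e.1.1 fun r => F (e.1.1 0, (1 - r) * e.1.2) := fun e =>
    funext fun t => by rw [(hΦ e).2, halfConcat, show 1 - (2 * t - 1) = 2 - 2 * t by ring]
  have hΦΨ := TwistedLoops.comp_ofLoop_homotopic_id hF0 hΦs hΦpath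
  have hΨΦ := TwistedLoops.ofLoop_comp_homotopic_id hF0 hΦs hΦpath
  obtain ⟨forgetParam⟩ := nonempty_prod_homotopyEquiv_of_contractibleSpace (RLoop X) unitInterval
  exact ⟨⟨_, hΦΨ, hΨΦ⟩,
    ⟨(ContinuousMap.HomotopyEquiv.mk Φ (TwistedLoops.ofLoop hF0) hΨΦ hΦΨ).trans forgetParam⟩⟩
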